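/- Let w ∈ Word(ν) and let w' be the word obtained by deleting all letters equal to 1, and w'' the word obtained by replacing every letter greater than 1 by 2. Then inv(w) = inv(w') + inv(w''), and the map w ↦ (w', w'') is a bijection from Word(ν_1,...,ν_m) to Word(ν_2,...,ν_m) × Word(ν_1, n - ν_1). -/

import Mathlib

open Finset

/-- The canonical word of weight `ν`: `ν.get 0` letters `1`, then `ν.get 1` letters `2`, etc. -/
def canonicalWord (ν : List ℕ) : List ℕ :=
  (List.range ν.length).flatMap fun i => List.replicate (ν.getD i 0) (i + 1)

/-- The (finite) set of all words of weight `ν`, i.e. all rearrangements of the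
canonical word of weight `ν`. -/
def WordSet (ν : List ℕ) : Finset (List ℕ) :=
  (canonicalWord ν).permutations.toFinset

/-- The number of inversions of a word: pairs of positions `i < j` with `w i > w j`. -/
def invL : List ℕ → ℕ
  | [] => 0
  | a :: l => (l.countP fun b => decide (b < a)) + invL l

/-- The major index of a word: the sum of the (1-based) positions `i` with `w_i > w_{i+1}`. -/
def majL (w : List ℕ) : ℕ :=
  ∑ i ∈ Finset.range w.length,
    if w.getD (i + 1) 0 < w.getD i 0 ∧ i + 1 < w.length then i + 1 else 0

/-!
Every inversion of `w` either involves two letters `> 1`, and these are exactly the inversions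
of `w'`, or pairs a letter `> 1` with a later `1`, and these are exactly the inversions of `w''`;
two `1`s never form an inversion. Conversely `w` is recovered from `(w', w'')` by replacing the
successive `2`s of `w''` by the successive letters of `w'`.
-/

theorem canonicalWord_nil : canonicalWord [] = [] := rfl

theorem canonicalWord_cons (a : ℕ) (t : List ℕ) :
    canonicalWord (a :: t) = List.replicate a 1 ++ (canonicalWord t).map (· + 1) := by
  simp [canonicalWord, List.range_succ_eq_map, List.flatMap_map, List.map_flatMap]

theorem canonicalWord_pair (a b : ℕ) :
    canonicalWord [a, b] = List.replicate a 1 ++ List.replicate b 2 := by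
  simp [canonicalWord_cons, canonicalWord_nil]

theorem canonicalWord_eq_cons_getD_tail (ν : List ℕ) :
    canonicalWord ν = canonicalWord (ν.getD 0 0 :: ν.tail) := by
  cases ν <;> simp [canonicalWord_cons, canonicalWord_nil]

theorem length_canonicalWord (ν : List ℕ) : (canonicalWord ν).length = ν.sum := by
  induction ν with
  | nil => rfl
  | cons a t ih => simp [canonicalWord_cons, ih]

theorem count_succ_map_add_one (l : List ℕ) (k : ℕ) :
    (l.map (· + 1)).count (k + 1) = l.count k :=
  List.count_map_of_injective _ _ (add_left_injective 1) k

theorem zero_notMem_canonicalWord (ν : List ℕ) : 0 ∉ canonicalWord ν := by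
  cases ν <;> simp [canonicalWord_cons, canonicalWord_nil, List.mem_replicate]

theorem count_succ_canonicalWord (ν : List ℕ) (k : ℕ) :
    (canonicalWord ν).count (k + 1) = ν.getD k 0 := by
  induction ν generalizing k with
  | nil => rfl
  | cons a t ih =>
    rw [canonicalWord_cons, List.count_append, count_succ_map_add_one, List.count_replicate]
    cases k with
    | zero => simp [List.count_eq_zero.mpr (zero_notMem_canonicalWord _)]
    | succ k => simp [ih]

theorem mem_WordSet_iff_perm {ν w : List ℕ} : w ∈ WordSet ν ↔ w.Perm (canonicalWord ν) := by
  simp [WordSet, List.mem_permutations]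

theorem zero_notMem_of_mem_WordSet {ν w : List ℕ} (hw : w ∈ WordSet ν) : 0 ∉ w :=
  fun h0 => zero_notMem_canonicalWord ν ((mem_WordSet_iff_perm.mp hw).subset h0)

theorem mem_WordSet_iff_count {ν w : List ℕ} :
    w ∈ WordSet ν ↔ w.count 0 = 0 ∧ ∀ k, w.count (k + 1) = ν.getD k 0 := by
  rw [mem_WordSet_iff_perm, List.perm_iff_count, ← Nat.and_forall_add_one,
    List.count_eq_zero.mpr (zero_notMem_canonicalWord ν)]
  simp only [count_succ_canonicalWord]

theorem mem_WordSet_zero_cons_iff {t w : List ℕ} :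
    w ∈ WordSet (0 :: t) ↔
      w.count 0 = 0 ∧ w.count 1 = 0 ∧ ∀ k, w.count (k + 2) = t.getD k 0 := by
  rw [mem_WordSet_iff_count, ← Nat.and_forall_add_one]
  rfl

theorem WordSet_eq_cons_getD_tail (ν : List ℕ) :
    WordSet ν = WordSet (ν.getD 0 0 :: ν.tail) := by
  rw [WordSet, canonicalWord_eq_cons_getD_tail, WordSet]

def deleteOnes (w : List ℕ) : List ℕ := w.filter fun x => x ≠ 1

def collapseAboveOne (w : List ℕ) : List ℕ := w.map fun x => if x = 1 then 1 else 2

@[simp] theorem deleteOnes_nil : deleteOnes [] = [] := rfl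

@[simp] theorem deleteOnes_cons_one (l : List ℕ) : deleteOnes (1 :: l) = deleteOnes l := by
  simp [deleteOnes]

@[simp] theorem deleteOnes_cons_of_ne_one {a : ℕ} (ha : a ≠ 1) (l : List ℕ) :
    deleteOnes (a :: l) = a :: deleteOnes l := by
  simp [deleteOnes, ha]

@[simp] theorem collapseAboveOne_nil : collapseAboveOne [] = [] := rfl

@[simp] theorem collapseAboveOne_cons_one (l : List ℕ) :
    collapseAboveOne (1 :: l) = 1 :: collapseAboveOne l := by
  simp [collapseAboveOne]

@[simp] theorem collapseAboveOne_cons_of_ne_one {a : ℕ} (ha : a ≠ 1) (l : List ℕ) :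
    collapseAboveOne (a :: l) = 2 :: collapseAboveOne l := by
  simp [collapseAboveOne, ha]

theorem count_deleteOnes_of_ne_one (w : List ℕ) {x : ℕ} (hx : x ≠ 1) :
    (deleteOnes w).count x = w.count x :=
  List.count_filter (by simpa using hx)

theorem count_one_collapseAboveOne (w : List ℕ) : (collapseAboveOne w).count 1 = w.count 1 := by
  induction w with
  | nil => rfl
  | cons a l ih => by_cases ha : a = 1 <;> simp [ha, ih]

theorem zero_notMem_collapseAboveOne (w : List ℕ) : 0 ∉ collapseAboveOne w := by
  simp only [collapseAboveOne, List.mem_map, not_exists, not_and]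
  intro x _
  split <;> omega

theorem deleteOnes_canonicalWord_cons (a : ℕ) (t : List ℕ) :
    deleteOnes (canonicalWord (a :: t)) = canonicalWord (0 :: t) := by
  rw [canonicalWord_cons, canonicalWord_cons, deleteOnes, List.filter_append,
    List.filter_eq_nil_iff.mpr (by simp), List.filter_eq_self.mpr
      (by simpa using fun x hx => ne_of_mem_of_not_mem hx (zero_notMem_canonicalWord t))]
  rfl

theorem collapseAboveOne_canonicalWord_cons (a : ℕ) (t : List ℕ) :
    collapseAboveOne (canonicalWord (a :: t)) = canonicalWord [a, t.sum] := by
  rw [canonicalWord_cons, canonicalWord_pair, collapseAboveOne, List.map_append, List.map_map,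
    List.map_replicate, if_pos rfl, List.map_congr_left (g := fun _ => 2)
      (by simpa using fun x hx => ne_of_mem_of_not_mem hx (zero_notMem_canonicalWord t)),
    List.map_const', length_canonicalWord]

theorem perm_iff_deleteOnes_perm_and_collapseAboveOne_perm {w w' : List ℕ} :
    w.Perm w' ↔ (deleteOnes w).Perm (deleteOnes w') ∧
      (collapseAboveOne w).Perm (collapseAboveOne w') := by
  refine ⟨fun h => ⟨h.filter _, h.map _⟩,
    fun ⟨hd, hc⟩ => List.perm_iff_count.mpr fun x => ?_⟩
  by_cases hx : x = 1
  · subst hx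
    rw [← count_one_collapseAboveOne, hc.count_eq, count_one_collapseAboveOne]
  · rw [← count_deleteOnes_of_ne_one _ hx, hd.count_eq, count_deleteOnes_of_ne_one _ hx]

theorem invL_cons_one {l : List ℕ} (h : 0 ∉ l) : invL (1 :: l) = invL l := by
  rw [invL, List.countP_eq_zero.mpr fun x hx => by simpa using ne_of_mem_of_not_mem hx h, zero_add]

theorem countP_lt_two_collapseAboveOne (l : List ℕ) :
    (collapseAboveOne l).countP (· < 2) = l.count 1 := by
  rw [collapseAboveOne, List.countP_map, List.count_eq_countP]
  exact List.countP_congr fun x _ => by by_cases hx : x = 1 <;> simp [hx]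

theorem countP_lt_eq_count_one_add_countP_deleteOnes (l : List ℕ) {a : ℕ} (ha : 2 ≤ a) :
    l.countP (· < a) = l.count 1 + (deleteOnes l).countP (· < a) := by
  rw [l.countP_eq_countP_filter_add _ fun x => x ≠ 1, add_comm, deleteOnes, List.countP_filter,
    List.count_eq_countP]
  congr 1
  refine List.countP_congr fun x _ => ?_
  by_cases hx : x = 1
  · simpa [hx] using (by omega : 1 < a)
  · simp [hx]

theorem invL_eq_invL_deleteOnes_add_invL_collapseAboveOne {w : List ℕ} (h : 0 ∉ w) :
    invL w = invL (deleteOnes w) + invL (collapseAboveOne w) := by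
  induction w with
  | nil => rfl
  | cons a l ih =>
    have hl : 0 ∉ l := fun h0 => h (List.mem_cons_of_mem a h0)
    by_cases ha : a = 1
    · subst ha
      rw [invL_cons_one hl, deleteOnes_cons_one, collapseAboveOne_cons_one,
        invL_cons_one (zero_notMem_collapseAboveOne l), ih hl]
    · have ha2 : 2 ≤ a := by
        have : a ≠ 0 := fun h0 => h (h0 ▸ List.mem_cons_self)
        omega
      rw [deleteOnes_cons_of_ne_one ha, collapseAboveOne_cons_of_ne_one ha]
      simp only [invL]
      rw [countP_lt_eq_count_one_add_countP_deleteOnes l ha2, countP_lt_two_collapseAboveOne,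
        ih hl]
      ring

def insertOnes : List ℕ → List ℕ → List ℕ
  | _, [] => []
  | u, c :: v => if c = 1 then 1 :: insertOnes u v else u.headI :: insertOnes u.tail v

theorem insertOnes_deleteOnes_collapseAboveOne (w : List ℕ) :
    insertOnes (deleteOnes w) (collapseAboveOne w) = w := by
  induction w with
  | nil => rfl
  | cons a l ih =>
    by_cases ha : a = 1
    · subst ha
      simp [insertOnes, ih]
    · simp [insertOnes, ha, ih]

theorem deleteOnes_insertOnes_and_collapseAboveOne_insertOnes {u v : List ℕ} (hu : 1 ∉ u)
    (hv : ∀ c ∈ v, c = 1 ∨ c = 2) (hlen : v.count 2 = u.length) :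
    deleteOnes (insertOnes u v) = u ∧ collapseAboveOne (insertOnes u v) = v := by
  induction v generalizing u with
  | nil => simp [insertOnes, List.eq_nil_of_length_eq_zero hlen.symm]
  | cons c v ih =>
    have hv' : ∀ c ∈ v, c = 1 ∨ c = 2 := fun c hc => hv c (List.mem_cons_of_mem _ hc)
    rcases hv c List.mem_cons_self with rfl | rfl
    · simpa [insertOnes] using ih hu hv' (by simpa using hlen)
    · obtain _ | ⟨a, u⟩ := u
      · simp at hlen
      · have ha : a ≠ 1 := fun h => hu (h ▸ List.mem_cons_self)
        simpa [insertOnes, ha] using ih (fun h => hu (List.mem_cons_of_mem a h)) hv'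
          (by simpa using hlen)

theorem deleteOnes_insertOnes_and_collapseAboveOne_insertOnes_of_mem {a : ℕ} {t u v : List ℕ}
    (hu : u ∈ WordSet (0 :: t)) (hv : v ∈ WordSet [a, t.sum]) :
    deleteOnes (insertOnes u v) = u ∧ collapseAboveOne (insertOnes u v) = v := by
  have hu' := mem_WordSet_iff_perm.mp hu
  have hv' := mem_WordSet_iff_perm.mp hv
  refine deleteOnes_insertOnes_and_collapseAboveOne_insertOnes ?_ (fun c hc => ?_) ?_
  · exact List.count_eq_zero.mp (mem_WordSet_zero_cons_iff.mp hu).2.1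
  · have := hv'.subset hc
    simp only [canonicalWord_pair, List.mem_append, List.mem_replicate] at this
    omega
  · rw [hv'.count_eq, hu'.length_eq, count_succ_canonicalWord, length_canonicalWord]
    simp

theorem mem_WordSet_cons_iff {a : ℕ} {t w : List ℕ} :
    w ∈ WordSet (a :: t) ↔
      deleteOnes w ∈ WordSet (0 :: t) ∧ collapseAboveOne w ∈ WordSet [a, t.sum] := by
  simp only [mem_WordSet_iff_perm, ← deleteOnes_canonicalWord_cons a,
    ← collapseAboveOne_canonicalWord_cons]
  exact perm_iff_deleteOnes_perm_and_collapseAboveOne_perm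

theorem bijOn_deleteOnes_collapseAboveOne (a : ℕ) (t : List ℕ) :
    Set.BijOn (fun w => (deleteOnes w, collapseAboveOne w)) (WordSet (a :: t))
      (WordSet (0 :: t) ×ˢ WordSet [a, t.sum]) := by
  have hinv : Set.RightInvOn (fun p : List ℕ × List ℕ => insertOnes p.1 p.2)
      (fun w => (deleteOnes w, collapseAboveOne w)) (WordSet (0 :: t) ×ˢ WordSet [a, t.sum]) :=
    fun p hp =>
      Prod.ext_iff.mpr (deleteOnes_insertOnes_and_collapseAboveOne_insertOnes_of_mem hp.1 hp.2)
  refine Set.InvOn.bijOn ⟨fun w _ => insertOnes_deleteOnes_collapseAboveOne w, hinv⟩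
    (fun w hw => mem_WordSet_cons_iff.mp hw) fun p hp => mem_WordSet_cons_iff.mpr ?_
  rw [Set.mem_prod] at hp
  rwa [← hinv hp] at hp

/-- For `w` a word of weight `ν` let `w'` be obtained by deleting all letters `1` and `w''`
by replacing every letter `> 1` by `2`.  Then `inv w = inv w' + inv w''`, and
`w ↦ (w', w'')` is a bijection from `Word(ν₁,…,ν_m)` onto
`Word(ν₂,…,ν_m) × Word(ν₁, n - ν₁)` (the first factor written in the letters `2,…,m`). -/
theorem stmt6 (ν : List ℕ) :
    (∀ w ∈ WordSet ν,
      invL w = invL (w.filter fun x => x ≠ 1) + invL (w.map fun x => if x = 1 then 1 else 2)) ∧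
    Set.BijOn
      (fun w : List ℕ => (w.filter fun x => x ≠ 1, w.map fun x => if x = 1 then 1 else 2))
      (WordSet ν : Set (List ℕ))
      {p : List ℕ × List ℕ |
        (p.1.count 0 = 0 ∧ p.1.count 1 = 0 ∧ ∀ k : ℕ, p.1.count (k + 2) = ν.getD (k + 1) 0) ∧
        p.2 ∈ (WordSet [ν.getD 0 0, ν.sum - ν.getD 0 0] : Set (List ℕ))} := by
  refine ⟨fun w hw => invL_eq_invL_deleteOnes_add_invL_collapseAboveOne
    (zero_notMem_of_mem_WordSet hw), ?_⟩
  have hsum : ν.sum - ν.getD 0 0 = ν.tail.sum := by cases ν <;> simp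
  rw [WordSet_eq_cons_getD_tail ν]
  convert bijOn_deleteOnes_collapseAboveOne (ν.getD 0 0) ν.tail using 1
  · rfl
  · ext p
    rw [hsum, Set.mem_prod, Finset.mem_coe, mem_WordSet_zero_cons_iff]
    cases ν <;> rfl
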